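/- arXiv:1909.03769 — 2 statements merged into one kernel-verified Lean document; each statement's English description precedes it below -/
import Mathlib

section
/- Let H be a complex Hilbert space and let p, q be orthogonal projections on H with ‖p − q‖ < 1. Set w := (p − q)². Then 1 − w is a positive invertible operator, and the operator Ũ := (1 − w)^{−1/2} (pq + (1−p)(1−q)), where (1 − w)^{−1/2} is defined by the continuous functional calculus, is unitary (Ũ*Ũ = ŨŨ* = 1) and satisfies Ũ q = p Ũ; in particular Ũ maps the range of q onto the range of p. -/
/-! For idempotents `p, q` the element `v = pq + (1 - p)(1 - q)` intertwines them, `v q = p v`,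
and `(qp + (1 - q)(1 - p)) v = v (qp + (1 - q)(1 - p)) = 1 - (p - q)²`; for projections the first
factor is `v*`. When `‖p - q‖ < 1` the element `1 - (p - q)²` is strictly positive, and as it
commutes with `v` and `p`, so does its inverse square root `c`. Hence `c v` is unitary and still
intertwines `q` with `p`; being surjective, it maps the range of `q` onto the range of `p`. -/

open Function Set

theorem Function.Semiconj.image_range_eq {α β : Type*} {f : α → β} {fa : α → α} {fb : β → β}
    (h : Semiconj f fa fb) (hf : Surjective f) : f '' range fa = range fb := by
  rw [← range_comp, h.comp_eq, range_comp, hf.range_eq, image_univ]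

section Ring

variable {R : Type*} [Ring R] {p q : R}

def katoIntertwiner (p q : R) : R := p * q + (1 - p) * (1 - q)

theorem IsIdempotentElem.commute_sub_sq (hp : IsIdempotentElem p) (hq : IsIdempotentElem q) :
    Commute p ((p - q) ^ 2) := by
  unfold Commute SemiconjBy
  simp only [sq, mul_sub, sub_mul, mul_assoc, hp.eq, hq.eq, hp.mul_self_mul]
  abel

theorem semiconjBy_katoIntertwiner (hp : IsIdempotentElem p) (hq : IsIdempotentElem q) :
    SemiconjBy (katoIntertwiner p q) q p := by
  simp only [SemiconjBy, katoIntertwiner, mul_sub, sub_mul, mul_add, add_mul, one_mul, mul_one, mul_assoc,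
    hp.eq, hq.eq, hp.mul_self_mul]
  abel

theorem katoIntertwiner_swap_mul (hp : IsIdempotentElem p) (hq : IsIdempotentElem q) :
    katoIntertwiner q p * katoIntertwiner p q = 1 - (p - q) ^ 2 := by
  simp only [katoIntertwiner, sq, mul_sub, sub_mul, mul_add, add_mul, one_mul, mul_one, mul_assoc,
    hp.eq, hq.eq, hp.mul_self_mul]
  abel

theorem katoIntertwiner_mul_swap (hp : IsIdempotentElem p) (hq : IsIdempotentElem q) :
    katoIntertwiner p q * katoIntertwiner q p = 1 - (p - q) ^ 2 := by
  rw [katoIntertwiner_swap_mul hq hp, ← neg_sub p q, neg_sq]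

theorem star_katoIntertwiner [StarRing R] (hp : IsSelfAdjoint p) (hq : IsSelfAdjoint q) :
    star (katoIntertwiner p q) = katoIntertwiner q p := by
  simp [katoIntertwiner, hp.star_eq, hq.star_eq]

end Ring

section CStarAlgebra

variable {A : Type*} [CStarAlgebra A] [PartialOrder A] [StarOrderedRing A]

theorem IsSelfAdjoint.isStrictlyPositive_one_sub_sq {a : A} (ha : IsSelfAdjoint a)
    (h : ‖a‖ < 1) : IsStrictlyPositive (1 - a ^ 2) := by
  have hsq : ‖a ^ 2‖ < 1 := by
    rw [sq, ha.norm_mul_self]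
    nlinarith [norm_nonneg a]
  refine (isUnit_one_sub_of_norm_lt_one hsq).isStrictlyPositive ?_
  rw [sub_nonneg]
  exact (CStarAlgebra.norm_le_one_iff_of_nonneg _ ha.sq_nonneg).1 hsq.le

theorem IsStrictlyPositive.cfc_inv_sqrt_mul_self_mul_cfc_inv_sqrt {a : A}
    (ha : IsStrictlyPositive a) :
    cfc (fun x : ℝ => (√x)⁻¹) a * a * cfc (fun x : ℝ => (√x)⁻¹) a = 1 := by
  have hsqrt_pos : ∀ x ∈ spectrum ℝ a, 0 < √x := fun x hx => Real.sqrt_pos.2 (ha.spectrum_pos hx)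
  have hcont : ContinuousOn (fun x : ℝ => (√x)⁻¹) (spectrum ℝ a) := fun x hx =>
    (Real.continuous_sqrt.continuousAt.inv₀ (hsqrt_pos x hx).ne').continuousWithinAt
  nth_rw 2 [← cfc_id' ℝ a]
  rw [← cfc_mul _ _ a hcont, ← cfc_mul _ _ a, ← cfc_one ℝ a]
  refine cfc_congr fun x hx => ?_
  rw [← Real.mul_self_sqrt (ha.spectrum_pos hx).le]
  field_simp [(hsqrt_pos x hx).ne']
  simp

theorem IsStrictlyPositive.cfc_inv_sqrt_mul_mem_unitary {a v : A} (ha : IsStrictlyPositive a)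
    (hva : star v * v = a) (hav : v * star v = a) :
    cfc (fun x : ℝ => (√x)⁻¹) a * v ∈ unitary A := by
  set c := cfc (fun x : ℝ => (√x)⁻¹) a
  have hcac : c * a * c = 1 := ha.cfc_inv_sqrt_mul_self_mul_cfc_inv_sqrt
  have hav_comm : Commute a v := calc
    a * v = v * (star v * v) := by rw [← hav, mul_assoc]
    _ = v * a := by rw [hva]
  have hcv : Commute c v := hav_comm.cfc_real _
  have hca : Commute c a := (Commute.refl a).cfc_real _
  have hc : IsSelfAdjoint c := cfc_predicate _ a
  refine ⟨?_, ?_⟩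
  · calc star (c * v) * (c * v) = star v * v * (c * c) := by
          rw [star_mul, hc.star_eq, mul_assoc, ← mul_assoc c c v, (hcv.mul_left hcv).eq,
            ← mul_assoc]
      _ = 1 := by rw [hva, ← mul_assoc, ← hca.eq, hcac]
  · calc c * v * star (c * v) = c * (v * star v) * c := by
          rw [star_mul, hc.star_eq]; simp only [mul_assoc]
      _ = 1 := by rw [hav, hcac]

end CStarAlgebra

/-- If `p, q` are orthogonal projections on a complex Hilbert space with `‖p - q‖ < 1` and
`w = (p - q)²`, then `1 - w` is positive and invertible, and
`Ũ = (1 - w)^{-1/2} (pq + (1-p)(1-q))` is unitary with `Ũ q = p Ũ`; in particular `Ũ` maps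
the range of `q` onto the range of `p`. -/
theorem kato_transformation_unitary {H : Type*} [NormedAddCommGroup H]
    [InnerProductSpace ℂ H] [CompleteSpace H]
    (p q : H →L[ℂ] H) (hp : p * p = p) (hps : star p = p)
    (hq : q * q = q) (hqs : star q = q) (hpq : ‖p - q‖ < 1) :
    0 ≤ 1 - (p - q) ^ 2 ∧ IsUnit (1 - (p - q) ^ 2) ∧
    ∀ U : H →L[ℂ] H,
      U = cfc (fun x : ℝ => (Real.sqrt x)⁻¹) (1 - (p - q) ^ 2) *
            (p * q + (1 - p) * (1 - q)) →
      star U * U = 1 ∧ U * star U = 1 ∧ U * q = p * U ∧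
      U '' Set.range q = Set.range p := by
  have hw : IsStrictlyPositive (1 - (p - q) ^ 2) :=
    (IsSelfAdjoint.sub hps hqs).isStrictlyPositive_one_sub_sq hpq
  refine ⟨hw.nonneg, hw.isUnit, fun U hU => ?_⟩
  set c := cfc (fun x : ℝ => (√x)⁻¹) (1 - (p - q) ^ 2)
  replace hU : U = c * katoIntertwiner p q := hU
  have hv_star : star (katoIntertwiner p q) = katoIntertwiner q p := star_katoIntertwiner hps hqs
  have hU_unitary : U ∈ unitary (H →L[ℂ] H) := hU ▸ hw.cfc_inv_sqrt_mul_mem_unitary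
    (hv_star ▸ katoIntertwiner_swap_mul hp hq) (hv_star ▸ katoIntertwiner_mul_swap hp hq)
  have hUq : U * q = p * U := by
    have hcp : Commute c p :=
      ((Commute.one_right p).sub_right (IsIdempotentElem.commute_sub_sq hp hq)).symm.cfc_real _
    rw [hU, mul_assoc, (semiconjBy_katoIntertwiner hp hq).eq, ← mul_assoc, hcp.eq, mul_assoc]
  refine ⟨hU_unitary.1, hU_unitary.2, hUq, ?_⟩
  refine Semiconj.image_range_eq (fun x => congr($hUq x)) fun x => ⟨star U x, ?_⟩
  exact congr($(hU_unitary.2) x)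
end

section
/- Let H be a complex Hilbert space, let p, q be orthogonal projections on H with ‖p − q‖ < 1, set w := (p − q)², and let Ũ := (1 − w)^{−1/2} (pq + (1−p)(1−q)) (so Ũ is unitary). Let A be a bounded linear operator on H commuting with p (Ap = pA). Then wq is a positive selfadjoint operator with ‖wq‖ < 1, and q Ũ* A Ũ q = (1 − wq)^{−1/2} (q A p q) (1 − wq)^{−1/2} q, where the inverse square roots are defined by the continuous functional calculus. -/
open scoped ContinuousFunctionalCalculus

section Aux

variable {B : Type*} [TopologicalSpace B] [Ring B] [StarRing B] [Algebra ℝ B] [T2Space B]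
  [IsTopologicalRing B] [ContinuousFunctionalCalculus ℝ B (IsSelfAdjoint : B → Prop)]

/-- If `b` commutes with a selfadjoint element `a`, then `b` commutes with `cfc f a`. -/
lemma commute_cfc_aux {a b : B} (ha : IsSelfAdjoint a) (hab : Commute b a) (f : ℝ → ℝ) :
    Commute b (cfc f a) := by
  by_cases hf : ContinuousOn f (spectrum ℝ a)
  · have H : ∀ g : C(spectrum ℝ a, ℝ), Commute b (cfcHom ha g) := by
      intro g
      induction g using ContinuousMap.induction_on_of_compact with
      | const r =>
        have : (ContinuousMap.const (spectrum ℝ a) r)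
            = algebraMap ℝ C(spectrum ℝ a, ℝ) r := rfl
        rw [this, AlgHomClass.commutes]
        exact (Algebra.commutes r b).symm
      | id =>
        rw [cfcHom_id ha]
        exact hab
      | star_id =>
        rw [star_trivial, cfcHom_id ha]
        exact hab
      | add f g hf hg =>
        rw [map_add]
        exact hf.add_right hg
      | mul f g hf hg =>
        rw [map_mul]
        exact hf.mul_right hg
      | frequently f hf =>
        have hcl : IsClosed {g : C(spectrum ℝ a, ℝ) | Commute b (cfcHom ha g)} := by
          apply isClosed_eq
          · exact (continuous_mul_left b).comp (cfcHom_continuous ha)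
          · exact (continuous_mul_right b).comp (cfcHom_continuous ha)
        exact hcl.closure_subset (mem_closure_iff_frequently.mpr hf)
    rw [cfc_apply f a ha hf]
    exact H _
  · rw [cfc_apply_of_not_continuousOn a hf]
    exact Commute.zero_right b

end Aux

lemma sqrt_sq_aux {H : Type*} [NormedAddCommGroup H] [InnerProductSpace ℂ H]
    [CompleteSpace H] (x : H →L[ℂ] H) (hx : 0 ≤ x) : cfc Real.sqrt (x * x) = x := by
  have hx_sa : IsSelfAdjoint x := IsSelfAdjoint.of_nonneg hx
  have h1 : cfc (fun r : ℝ => r ^ 2) x = x * x := by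
    rw [cfc_pow (fun r : ℝ => r) 2 x (continuousOn_id) hx_sa, cfc_id' ℝ x hx_sa, sq]
  have h2 : cfc Real.sqrt (x * x) = cfc (fun r : ℝ => Real.sqrt (r ^ 2)) x := by
    rw [← h1, ← cfc_comp Real.sqrt (fun r : ℝ => r ^ 2) x hx_sa
      (Real.continuous_sqrt.continuousOn) (by fun_prop)]
    rfl
  rw [h2]
  calc cfc (fun r : ℝ => Real.sqrt (r ^ 2)) x = cfc (fun r : ℝ => r) x :=
        cfc_congr fun r hr => by
          rw [Real.sqrt_sq_eq_abs, abs_of_nonneg (spectrum_nonneg_of_nonneg hx hr)]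
    _ = x := cfc_id' ℝ x hx_sa


set_option maxHeartbeats 2000000 in
/-- Let `p, q` be orthogonal projections on a complex Hilbert space with `‖p - q‖ < 1`,
`w = (p - q)²`, and `Ũ = (1 - w)^{-1/2}(pq + (1-p)(1-q))`. If `A` is a bounded operator
commuting with `p`, then `wq` is positive selfadjoint with `‖wq‖ < 1` and
`q Ũ* A Ũ q = (1 - wq)^{-1/2} (q A p q) (1 - wq)^{-1/2} q`. -/
theorem kato_conjugation_formula {H : Type*} [NormedAddCommGroup H]
    [InnerProductSpace ℂ H] [CompleteSpace H]
    (p q A : H →L[ℂ] H) (hp : p * p = p) (hps : star p = p)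
    (hq : q * q = q) (hqs : star q = q) (hpq : ‖p - q‖ < 1)
    (hA : A * p = p * A) :
    ∀ w U : H →L[ℂ] H,
      w = (p - q) ^ 2 →
      U = cfc (fun x : ℝ => (Real.sqrt x)⁻¹) (1 - w) * (p * q + (1 - p) * (1 - q)) →
      IsSelfAdjoint (w * q) ∧ 0 ≤ w * q ∧ ‖w * q‖ < 1 ∧
      q * star U * A * U * q =
        cfc (fun x : ℝ => (Real.sqrt x)⁻¹) (1 - w * q) * (q * A * p * q) *
          cfc (fun x : ℝ => (Real.sqrt x)⁻¹) (1 - w * q) * q := by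
  intro w U hw hU
  set f : ℝ → ℝ := fun x => (Real.sqrt x)⁻¹ with hf_def
  -- basic algebra helpers
  have hp1 : ∀ x : H →L[ℂ] H, p * (p * x) = p * x := fun x => by rw [← mul_assoc, hp]
  have hq1 : ∀ x : H →L[ℂ] H, q * (q * x) = q * x := fun x => by rw [← mul_assoc, hq]
  have hw' : w = p + q - p * q - q * p := by
    have e1 : (p - q) ^ 2 = p * p + q * q - p * q - q * p := by noncomm_ring
    rw [hw, e1, hp, hq]
  -- w commutes with p and q
  have hwp : w * p = p * w := by
    rw [hw']
    simp only [sub_mul, add_mul, mul_sub, mul_add, mul_assoc, hp, hq, hp1, hq1]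
    abel
  have hwq : w * q = q * w := by
    rw [hw']
    simp only [sub_mul, add_mul, mul_sub, mul_add, mul_assoc, hp, hq, hp1, hq1]
    abel
  -- selfadjointness
  have hpq_sa : IsSelfAdjoint (p - q) := by
    rw [IsSelfAdjoint, star_sub, hps, hqs]
  have hw_sa : IsSelfAdjoint w := hw ▸ hpq_sa.pow 2
  have hwq_sa : IsSelfAdjoint (w * q) := by
    rw [IsSelfAdjoint, star_mul, hqs, hw_sa.star_eq, ← hwq]
  -- positivity of w * q
  have hwq_eq : w * q = star ((p - q) * q) * ((p - q) * q) := by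
    rw [star_mul, hqs, hpq_sa.star_eq]
    calc w * q = w * (q * q) := by rw [hq]
      _ = q * w * q := by rw [← hwq, mul_assoc]
      _ = q * (p - q) * ((p - q) * q) := by
          rw [hw, sq]; noncomm_ring
  have hwq_nonneg : 0 ≤ w * q := hwq_eq ▸ star_mul_self_nonneg _
  -- positivity of w
  have hw_eq : w = star (p - q) * (p - q) := by rw [hw, sq, hpq_sa.star_eq]
  have hw_nonneg : 0 ≤ w := hw_eq ▸ star_mul_self_nonneg _
  -- norms
  have hq_norm : ‖q‖ ≤ 1 := by
    have h2 : ‖q‖ * ‖q‖ = ‖q‖ := by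
      rw [← CStarRing.norm_star_mul_self (x := q), hqs, hq]
    nlinarith [norm_nonneg q]
  have hw_norm : ‖w‖ < 1 := by
    calc ‖w‖ ≤ ‖p - q‖ ^ 2 := by rw [hw]; exact norm_pow_le' _ two_pos
      _ < 1 := by nlinarith [norm_nonneg (p - q)]
  have hwq_norm : ‖w * q‖ < 1 := by
    calc ‖w * q‖ ≤ ‖w‖ * ‖q‖ := norm_mul_le _ _
      _ < 1 := by nlinarith [norm_nonneg w]
  refine ⟨hwq_sa, hwq_nonneg, hwq_norm, ?_⟩
  -- the elements 1 - w and 1 - w*q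
  have hw_le_one : w ≤ 1 := (CStarAlgebra.norm_le_one_iff_of_nonneg w hw_nonneg).mp hw_norm.le
  have hwq_le_one : w * q ≤ 1 :=
    (CStarAlgebra.norm_le_one_iff_of_nonneg (w * q) hwq_nonneg).mp hwq_norm.le
  have ha_nonneg : (0 : H →L[ℂ] H) ≤ 1 - w := sub_nonneg.mpr hw_le_one
  have hb_nonneg : (0 : H →L[ℂ] H) ≤ 1 - w * q := sub_nonneg.mpr hwq_le_one
  have ha_sa : IsSelfAdjoint (1 - w) := IsSelfAdjoint.of_nonneg ha_nonneg
  have hb_sa : IsSelfAdjoint (1 - w * q) := IsSelfAdjoint.of_nonneg hb_nonneg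
  
  -- units
  set aU : (H →L[ℂ] H)ˣ := Units.oneSub w hw_norm with haU
  set bU : (H →L[ℂ] H)ˣ := Units.oneSub (w * q) hwq_norm with hbU
  have haU_val : (aU : H →L[ℂ] H) = 1 - w := rfl
  have hbU_val : (bU : H →L[ℂ] H) = 1 - w * q := rfl
  -- positivity of the spectra
  have ha_spec : ∀ x ∈ spectrum ℝ (1 - w), 0 < x := by
    intro x hx
    refine (spectrum_nonneg_of_nonneg ha_nonneg hx).lt_of_ne' ?_
    rintro rfl
    exact spectrum.zero_notMem ℝ aU.isUnit (haU_val ▸ hx)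
  have hb_spec : ∀ x ∈ spectrum ℝ (1 - w * q), 0 < x := by
    intro x hx
    refine (spectrum_nonneg_of_nonneg hb_nonneg hx).lt_of_ne' ?_
    rintro rfl
    exact spectrum.zero_notMem ℝ bU.isUnit (hbU_val ▸ hx)
  -- continuity of f on the spectra
  have hf_cont : ∀ (c : H →L[ℂ] H), (∀ x ∈ spectrum ℝ c, 0 < x) →
      ContinuousOn f (spectrum ℝ c) := fun c hc =>
    Real.continuous_sqrt.continuousOn.inv₀ fun x hx => (Real.sqrt_pos.mpr (hc x hx)).ne'
  set s := cfc f (1 - w) with hs_def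
  set t := cfc f (1 - w * q) with ht_def
  have hs_sa : IsSelfAdjoint s := cfc_predicate f (1 - w)
  have ht_sa : IsSelfAdjoint t := cfc_predicate f (1 - w * q)
  -- elements commuting with s and t
  have hqa : Commute q (1 - w) := by
    unfold Commute SemiconjBy
    rw [mul_sub, sub_mul, mul_one, one_mul, hwq]
  have hpa : Commute p (1 - w) := by
    unfold Commute SemiconjBy
    rw [mul_sub, sub_mul, mul_one, one_mul, hwp]
  have hqb : Commute q (1 - w * q) := by
    unfold Commute SemiconjBy
    rw [mul_sub, sub_mul, mul_one, one_mul, ← mul_assoc, ← hwq, mul_assoc, hq]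
  have hqs_comm : Commute q s := commute_cfc_aux ha_sa hqa f
  have hps_comm : Commute p s := commute_cfc_aux ha_sa hpa f
  have hqt_comm : Commute q t := commute_cfc_aux hb_sa hqb f
  -- squares of s and t
  have ht2 : t * t = (↑bU⁻¹ : H →L[ℂ] H) := by
    rw [ht_def, ← cfc_mul f f _ (hf_cont _ hb_spec) (hf_cont _ hb_spec)]
    have e : cfc (fun x => f x * f x) (1 - w * q) = cfc (fun x : ℝ => x⁻¹) (1 - w * q) :=
      cfc_congr fun x hx => by
        rw [hf_def]
        simp only
        rw [← mul_inv, Real.mul_self_sqrt (hb_spec x hx).le]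
    rw [e]
    exact cfc_inv_id (R := ℝ) bU hb_sa
  have hs2 : s * s = (↑aU⁻¹ : H →L[ℂ] H) := by
    rw [hs_def, ← cfc_mul f f _ (hf_cont _ ha_spec) (hf_cont _ ha_spec)]
    have e : cfc (fun x => f x * f x) (1 - w) = cfc (fun x : ℝ => x⁻¹) (1 - w) :=
      cfc_congr fun x hx => by
        rw [hf_def]
        simp only
        rw [← mul_inv, Real.mul_self_sqrt (ha_spec x hx).le]
    rw [e]
    exact cfc_inv_id (R := ℝ) aU ha_sa
  -- the inverses agree after multiplying by q
  have hbq_eq : (1 - w * q) * q = (1 - w) * q := by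
    rw [sub_mul, sub_mul, one_mul, mul_assoc, hq]
  have hqainv : Commute q (↑aU⁻¹ : H →L[ℂ] H) :=
    (show Commute q (aU : H →L[ℂ] H) from hqa).units_inv_right
  have hinv_q : (↑bU⁻¹ : H →L[ℂ] H) * q = (↑aU⁻¹ : H →L[ℂ] H) * q := by
    have hA1 : (↑bU⁻¹ : H →L[ℂ] H) * ((1 - w * q) * q) = q := by
      rw [← mul_assoc, show (↑bU⁻¹ : H →L[ℂ] H) * (1 - w * q) = 1 from bU.inv_mul, one_mul]
    have key : q = (↑bU⁻¹ : H →L[ℂ] H) * q * (1 - w) := by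
      calc q = (↑bU⁻¹ : H →L[ℂ] H) * ((1 - w * q) * q) := hA1.symm
        _ = (↑bU⁻¹ : H →L[ℂ] H) * ((1 - w) * q) := by rw [hbq_eq]
        _ = (↑bU⁻¹ : H →L[ℂ] H) * (q * (1 - w)) := by rw [← hqa.eq]
        _ = (↑bU⁻¹ : H →L[ℂ] H) * q * (1 - w) := by rw [mul_assoc]
    calc (↑bU⁻¹ : H →L[ℂ] H) * q
        = (↑bU⁻¹ : H →L[ℂ] H) * q * ((1 - w) * ↑aU⁻¹) := by
          rw [show (1 - w) * (↑aU⁻¹ : H →L[ℂ] H) = 1 from aU.mul_inv, mul_one]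
      _ = q * ↑aU⁻¹ := by rw [← mul_assoc, ← key]
      _ = (↑aU⁻¹ : H →L[ℂ] H) * q := hqainv.eq
  -- (t*q)² = (s*q)²
  have hsq_eq : (t * q) * (t * q) = (s * q) * (s * q) := by
    have e1 : (t * q) * (t * q) = t * t * q := by
      calc (t * q) * (t * q) = t * (q * t * q) := by rw [mul_assoc, mul_assoc]
        _ = t * (t * q * q) := by rw [hqt_comm.eq]
        _ = t * (t * (q * q)) := by rw [mul_assoc]
        _ = t * t * q := by rw [hq, mul_assoc]
    have e2 : (s * q) * (s * q) = s * s * q := by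
      calc (s * q) * (s * q) = s * (q * s * q) := by rw [mul_assoc, mul_assoc]
        _ = s * (s * q * q) := by rw [hqs_comm.eq]
        _ = s * (s * (q * q)) := by rw [mul_assoc]
        _ = s * s * q := by rw [hq, mul_assoc]
    rw [e1, e2, ht2, hs2, hinv_q]
  -- positivity of t*q and s*q
  have pos_key : ∀ (c : H →L[ℂ] H), IsSelfAdjoint c → (∀ x ∈ spectrum ℝ c, 0 < x) →
      Commute q c → 0 ≤ cfc f c * q := by
    intro c hc_sa hc hqc
    set g : ℝ → ℝ := fun x => Real.sqrt (f x) with hg_def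
    have hg_cont : ContinuousOn g (spectrum ℝ c) :=
      Real.continuous_sqrt.comp_continuousOn (hf_cont c hc)
    set r := cfc g c with hr_def
    have hr_sa : IsSelfAdjoint r := cfc_predicate g c
    have hqr : Commute q r := commute_cfc_aux hc_sa hqc g
    have hr2 : r * r = cfc f c := by
      rw [hr_def, ← cfc_mul g g c hg_cont hg_cont]
      exact cfc_congr fun x hx => Real.mul_self_sqrt (by positivity)
    have e : cfc f c * q = star (q * r) * (q * r) := by
      rw [star_mul, hqs, hr_sa.star_eq]
      calc cfc f c * q = r * (r * q) := by rw [← hr2, mul_assoc]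
        _ = r * (q * r) := by rw [← hqr.eq]
        _ = r * (q * (q * r)) := by rw [hq1]
        _ = r * q * (q * r) := by rw [← mul_assoc]
    rw [e]
    exact star_mul_self_nonneg _
  have htq_nonneg : 0 ≤ t * q := pos_key _ hb_sa hb_spec hqb
  have hsq_nonneg : 0 ≤ s * q := pos_key _ ha_sa ha_spec hqa
  -- t*q = s*q
  have h_tq_sq : t * q = s * q := by
    calc t * q = cfc Real.sqrt ((t * q) * (t * q)) := (sqrt_sq_aux _ htq_nonneg).symm
      _ = cfc Real.sqrt ((s * q) * (s * q)) := by rw [hsq_eq]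
      _ = s * q := sqrt_sq_aux _ hsq_nonneg
  -- the algebraic identities for U
  have hVq : (p * q + (1 - p) * (1 - q)) * q = p * q := by
    have h0 : (1 - q) * q = 0 := by rw [sub_mul, one_mul, hq, sub_self]
    rw [add_mul, mul_assoc p q q, hq, mul_assoc, h0, mul_zero, add_zero]
  have hUq : U * q = s * (p * q) := by rw [hU, mul_assoc, hVq]
  have hVs : star (p * q + (1 - p) * (1 - q)) = q * p + (1 - q) * (1 - p) := by
    simp only [star_add, star_mul, star_sub, star_one, hps, hqs]
  have hqU : q * star U = q * p * s := by
    have h0 : q * (1 - q) = 0 := by rw [mul_sub, mul_one, hq, sub_self]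
    rw [hU, star_mul, hVs, hs_sa.star_eq, ← mul_assoc, mul_add, ← mul_assoc,
      ← mul_assoc, h0, zero_mul, add_zero, hq]
  -- rewrite rules for the final normalization
  have R1 : ∀ x : H →L[ℂ] H, t * (q * x) = s * (q * x) := fun x => by
    rw [← mul_assoc, h_tq_sq, mul_assoc]
  have R2 : ∀ x : H →L[ℂ] H, s * (p * x) = p * (s * x) := fun x => by
    rw [← mul_assoc, ← hps_comm.eq, mul_assoc]
  have R2' : s * p = p * s := hps_comm.eq.symm
  have R3 : ∀ x : H →L[ℂ] H, s * (q * x) = q * (s * x) := fun x => by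
    rw [← mul_assoc, ← hqs_comm.eq, mul_assoc]
  have R3' : s * q = q * s := hqs_comm.eq.symm
  have R4 : ∀ x : H →L[ℂ] H, A * (p * x) = p * (A * x) := fun x => by
    rw [← mul_assoc, hA, mul_assoc]
  -- conclude
  rw [mul_assoc (q * star U * A) U q, hUq, hqU]
  simp only [mul_assoc, R1, h_tq_sq, R2, R2', R3, R3', R4, hA, hp1, hp, hq1, hq]
end
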